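/- Let (Y, Σ) be a measurable space and let Δ(Y) be the set of countably additive probability measures on (Y, Σ). Every preorder on Δ(Y) satisfying rational independence has an extension to a complete preorder on Δ(Y) satisfying rational independence. -/

import Mathlib

open MeasureTheory
open scoped ENNReal NNReal

/-- The strict part of a binary relation: `p ≻ q` iff `p ≽ q` and not `q ≽ p`. -/
def StrictRel {X : Type*} (R : X → X → Prop) (x y : X) : Prop := R x y ∧ ¬ R y x

/-- The mixture `a • p + (1 - a) • r` of two measures. -/
noncomputable def mix {Y : Type*} [MeasurableSpace Y] (a : NNReal) (p r : Measure Y) :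
    Measure Y := a • p + (1 - a) • r

/-- A relation on `Δ(Y)` (here: a relation on measures, considered on probability
measures) satisfies rational independence if for all probability measures `p, q, r` and
every rational `α ∈ (0, 1]`, `p ≽ q ↔ α p + (1-α) r ≽ α q + (1-α) r`. -/
def RatIndep {Y : Type*} [MeasurableSpace Y] (R : Measure Y → Measure Y → Prop) : Prop :=
  ∀ p q r : Measure Y, IsProbabilityMeasure p → IsProbabilityMeasure q →
    IsProbabilityMeasure r → ∀ a : ℚ, 0 < a → a ≤ 1 →
      (R p q ↔ R (mix (Real.toNNReal (a : ℝ)) p r) (mix (Real.toNNReal (a : ℝ)) q r))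

namespace RIExt

variable {Y : Type*} [MeasurableSpace Y]

/-- coercion of a rational into `NNReal` via `Real.toNNReal`. -/
noncomputable abbrev nn (a : ℚ) : NNReal := Real.toNNReal (a : ℝ)

lemma nn_coe {a : ℚ} (h : 0 ≤ a) : ((nn a : NNReal) : ℝ) = (a : ℝ) :=
  Real.coe_toNNReal _ (by exact_mod_cast h)

lemma nn_le_one {a : ℚ} (h : a ≤ 1) : nn a ≤ 1 := by
  rw [← Real.toNNReal_one]
  exact Real.toNNReal_mono (by exact_mod_cast h)

lemma nn_one_sub {a : ℚ} (h0 : 0 ≤ a) (h1 : a ≤ 1) : nn (1 - a) = 1 - nn a := by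
  have : ((nn (1 - a) : NNReal) : ℝ) = ((1 - nn a : NNReal) : ℝ) := by
    rw [nn_coe (by linarith), NNReal.coe_sub (nn_le_one h1), nn_coe h0]
    push_cast; ring
  exact_mod_cast this

/-- Difference of two measures as a real-valued set function. -/
noncomputable def dd (p q : Measure Y) : Set Y → ℝ :=
  fun A => (p A).toReal - (q A).toReal

lemma dd_self (p : Measure Y) : dd p p = 0 := by funext A; simp [dd]

lemma dd_neg (p q : Measure Y) : dd q p = -dd p q := by funext A; simp [dd]

lemma dd_add_dd (p q r : Measure Y) : dd p q + dd q r = dd p r := by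
  funext A; simp [dd]

lemma dd_eq_zero {p q : Measure Y} [IsFiniteMeasure p] [IsFiniteMeasure q]
    (h : dd p q = 0) : p = q := by
  ext A hA
  have := congrFun h A
  simp only [dd, Pi.zero_apply, sub_eq_zero] at this
  exact (ENNReal.toReal_eq_toReal_iff' (measure_ne_top p A) (measure_ne_top q A)).mp this

lemma mix_apply (a : NNReal) (p r : Measure Y) (A : Set Y) :
    mix a p r A = (a : ℝ≥0∞) * p A + ((1 - a : NNReal) : ℝ≥0∞) * r A := by
  simp [mix, Measure.add_apply, Measure.smul_apply, ENNReal.smul_def, smul_eq_mul, -Measure.coe_nnreal_smul]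

lemma isProb_mix {a : NNReal} (ha : a ≤ 1) {p r : Measure Y}
    (hp : IsProbabilityMeasure p) (hr : IsProbabilityMeasure r) :
    IsProbabilityMeasure (mix a p r) := by
  constructor
  rw [mix_apply, measure_univ, measure_univ, mul_one, mul_one, ← ENNReal.coe_add,
    add_tsub_cancel_of_le ha, ENNReal.coe_one]

lemma mix_apply_toReal {a : NNReal} (ha : a ≤ 1) (p r : Measure Y)
    [IsFiniteMeasure p] [IsFiniteMeasure r] (A : Set Y) :
    ((mix a p r) A).toReal = (a : ℝ) * (p A).toReal + (1 - (a : ℝ)) * (r A).toReal := by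
  rw [mix_apply, ENNReal.toReal_add, ENNReal.toReal_mul, ENNReal.toReal_mul,
    ENNReal.coe_toReal, ENNReal.coe_toReal, NNReal.coe_sub ha, NNReal.coe_one]
  · exact ENNReal.mul_ne_top ENNReal.coe_ne_top (measure_ne_top p A)
  · exact ENNReal.mul_ne_top ENNReal.coe_ne_top (measure_ne_top r A)

lemma mix_comm {a : NNReal} (ha : a ≤ 1) (p r : Measure Y) :
    mix (1 - a) p r = mix a r p := by
  unfold mix
  rw [tsub_tsub_cancel_of_le ha]
  exact add_comm _ _

lemma dd_mix {a : ℚ} (h0 : 0 ≤ a) (h1 : a ≤ 1) (p q p' q' : Measure Y)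
    [IsFiniteMeasure p] [IsFiniteMeasure q] [IsFiniteMeasure p'] [IsFiniteMeasure q'] :
    dd (mix (nn a) p p') (mix (nn a) q q')
      = (a : ℝ) • dd p q + (1 - (a : ℝ)) • dd p' q' := by
  funext A
  have h0' : (0:ℝ) ≤ (a : ℝ) := by exact_mod_cast h0
  simp only [dd, Pi.add_apply, Pi.smul_apply, smul_eq_mul]
  rw [mix_apply_toReal (nn_le_one h1), mix_apply_toReal (nn_le_one h1), nn_coe h0]
  ring


section RelLemmas

variable {R : Measure Y → Measure Y → Prop}

/-- Mixing two related pairs preserves the relation. -/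
lemma mix_R (htrans : ∀ p q r : Measure Y, IsProbabilityMeasure p → IsProbabilityMeasure q →
      IsProbabilityMeasure r → R p q → R q r → R p r) (hRI : RatIndep R) {p₁ q₁ p₂ q₂ : Measure Y} (h1 : IsProbabilityMeasure p₁)
    (h2 : IsProbabilityMeasure q₁) (h3 : IsProbabilityMeasure p₂)
    (h4 : IsProbabilityMeasure q₂) (hr1 : R p₁ q₁) (hr2 : R p₂ q₂)
    {a : ℚ} (ha0 : 0 < a) (ha1 : a < 1) :
    R (mix (nn a) p₁ p₂) (mix (nn a) q₁ q₂) := by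
  have h0le : (0:ℚ) ≤ a := le_of_lt ha0
  have h1le : a ≤ 1 := le_of_lt ha1
  have hb0 : (0:ℚ) < 1 - a := by linarith
  have hb1 : (1:ℚ) - a ≤ 1 := by linarith
  have e1 : R (mix (nn a) p₁ p₂) (mix (nn a) q₁ p₂) :=
    (hRI p₁ q₁ p₂ h1 h2 h3 a ha0 h1le).mp hr1
  have e2 : R (mix (nn (1-a)) p₂ q₁) (mix (nn (1-a)) q₂ q₁) :=
    (hRI p₂ q₂ q₁ h3 h4 h2 (1-a) hb0 hb1).mp hr2
  rw [nn_one_sub h0le h1le, mix_comm (nn_le_one h1le), mix_comm (nn_le_one h1le)] at e2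
  exact htrans _ _ _ (isProb_mix (nn_le_one h1le) h1 h3)
    (isProb_mix (nn_le_one h1le) h2 h3) (isProb_mix (nn_le_one h1le) h2 h4) e1 e2

/-- Mixing a strictly related pair with a (weakly) related pair is strict. -/
lemma mix_S (htrans : ∀ p q r : Measure Y, IsProbabilityMeasure p → IsProbabilityMeasure q →
      IsProbabilityMeasure r → R p q → R q r → R p r) (hRI : RatIndep R) {p₁ q₁ p₂ q₂ : Measure Y} (h1 : IsProbabilityMeasure p₁)
    (h2 : IsProbabilityMeasure q₁) (h3 : IsProbabilityMeasure p₂)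
    (h4 : IsProbabilityMeasure q₂) (hr1 : StrictRel R p₁ q₁) (hr2 : R p₂ q₂)
    {a : ℚ} (ha0 : 0 < a) (ha1 : a < 1) :
    StrictRel R (mix (nn a) p₁ p₂) (mix (nn a) q₁ q₂) := by
  have h0le : (0:ℚ) ≤ a := le_of_lt ha0
  have h1le : a ≤ 1 := le_of_lt ha1
  have hb0 : (0:ℚ) < 1 - a := by linarith
  have hb1 : (1:ℚ) - a ≤ 1 := by linarith
  refine ⟨mix_R htrans hRI h1 h2 h3 h4 hr1.1 hr2 ha0 ha1, fun hcon => ?_⟩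
  -- from hr2 : p₂ ≽ q₂, mixing with p₁ : mix a p₁ p₂ ≽ mix a p₁ q₂
  have e2 : R (mix (nn (1-a)) p₂ p₁) (mix (nn (1-a)) q₂ p₁) :=
    (hRI p₂ q₂ p₁ h3 h4 h1 (1-a) hb0 hb1).mp hr2
  rw [nn_one_sub h0le h1le, mix_comm (nn_le_one h1le), mix_comm (nn_le_one h1le)] at e2
  -- hcon : mix a q₁ q₂ ≽ mix a p₁ p₂ ; transitivity: mix a q₁ q₂ ≽ mix a p₁ q₂
  have e3 : R (mix (nn a) q₁ q₂) (mix (nn a) p₁ q₂) :=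
    htrans _ _ _ (isProb_mix (nn_le_one h1le) h2 h4) (isProb_mix (nn_le_one h1le) h1 h3)
      (isProb_mix (nn_le_one h1le) h1 h4) hcon e2
  exact hr1.2 ((hRI q₁ p₁ q₂ h2 h1 h4 a ha0 h1le).mpr e3)

/-- Core conservativity lemma: if `c • (p' - q') = p - q` with `p' ≽ q'` then `p ≽ q`. -/
lemma core (hRI : RatIndep R) {p q p' q' : Measure Y} (hp : IsProbabilityMeasure p)
    (hq : IsProbabilityMeasure q) (hp' : IsProbabilityMeasure p')
    (hq' : IsProbabilityMeasure q') (hr : R p' q') {c : ℚ} (hc : 0 < c)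
    (heq : (c:ℝ) • dd p' q' = dd p q) : R p q := by
  have h1c : (0:ℚ) < 1 + c := by linarith
  set α : ℚ := c / (1 + c) with hα
  set β : ℚ := 1 / (1 + c) with hβ
  have hα0 : 0 < α := by positivity
  have hα1 : α ≤ 1 := by rw [hα, div_le_one h1c]; linarith
  have hβ0 : 0 < β := by positivity
  have hβ1 : β ≤ 1 := by rw [hβ, div_le_one h1c]; linarith
  have hβα : α = 1 - β := by rw [hα, hβ]; field_simp; ring
  -- e2 : mix α q' q = mix β q q'
  have e2 : mix (nn α) q' q = mix (nn β) q q' := by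
    rw [hβα, nn_one_sub (le_of_lt hβ0) hβ1, mix_comm (nn_le_one hβ1)]
  -- e1 : mix α p' q = mix β p q'
  have e1 : mix (nn α) p' q = mix (nn β) p q' := by
    haveI := hp; haveI := hq; haveI := hp'; haveI := hq'
    haveI := isProb_mix (nn_le_one hα1) hp' hq
    haveI := isProb_mix (nn_le_one hβ1) hp hq'
    ext A hA
    refine (ENNReal.toReal_eq_toReal_iff' (measure_ne_top _ A) (measure_ne_top _ A)).mp ?_
    rw [mix_apply_toReal (nn_le_one hα1), mix_apply_toReal (nn_le_one hβ1),
      nn_coe (le_of_lt hα0), nn_coe (le_of_lt hβ0)]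
    have hA' := congrFun heq A
    simp only [dd, Pi.smul_apply, smul_eq_mul] at hA'
    have h1c' : (0:ℝ) < 1 + (c:ℝ) := by exact_mod_cast h1c
    have hαβ : (α:ℝ) = (c:ℝ) * (β:ℝ) := by rw [hα, hβ]; push_cast; field_simp
    have hβα' : (1:ℝ) - (α:ℝ) = (β:ℝ) := by rw [hα, hβ]; push_cast; field_simp; ring
    have hαβ' : (1:ℝ) - (β:ℝ) = (α:ℝ) := by rw [hα, hβ]; push_cast; field_simp; ring
    rw [hβα', hαβ', hαβ]
    linear_combination (β:ℝ) * hA'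
  have := (hRI p' q' q hp' hq' hq α hα0 hα1).mp hr
  rw [e1, e2] at this
  exact (hRI p q q' hp hq hq' β hβ0 hβ1).mpr this


/-- Combination identity for differences. -/
lemma dd_comb {c c' : ℚ} (hc : 0 < c) (hc' : 0 < c') (p q p' q' : Measure Y)
    [IsFiniteMeasure p] [IsFiniteMeasure q] [IsFiniteMeasure p'] [IsFiniteMeasure q'] :
    (c:ℝ) • dd p q + (c':ℝ) • dd p' q'
      = ((c + c' : ℚ):ℝ) • dd (mix (nn (c/(c+c'))) p p') (mix (nn (c/(c+c'))) q q') := by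
  have h1 : (0:ℚ) < c + c' := by linarith
  have h0 : (0:ℚ) ≤ c/(c+c') := by positivity
  have hle : c/(c+c') ≤ 1 := by rw [div_le_one h1]; linarith
  rw [dd_mix h0 hle]
  funext A
  have h1' : (0:ℝ) < (c:ℝ) + (c':ℝ) := by exact_mod_cast h1
  simp only [Pi.add_apply, Pi.smul_apply, smul_eq_mul]
  push_cast
  field_simp
  ring

end RelLemmas

section Cone

variable (R : Measure Y → Measure Y → Prop)

/-- The rational cone generated by differences of related pairs. -/
def cone : Set (Set Y → ℝ) :=
  {x | x = 0 ∨ ∃ c : ℚ, 0 < c ∧ ∃ p q : Measure Y, IsProbabilityMeasure p ∧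
    IsProbabilityMeasure q ∧ R p q ∧ x = (c:ℝ) • dd p q}

/-- The strict cone. -/
def scone : Set (Set Y → ℝ) :=
  {x | ∃ c : ℚ, 0 < c ∧ ∃ p q : Measure Y, IsProbabilityMeasure p ∧
    IsProbabilityMeasure q ∧ StrictRel R p q ∧ x = (c:ℝ) • dd p q}

variable {R}

lemma cone_zero : (0 : Set Y → ℝ) ∈ cone R := Or.inl rfl

lemma cone_smul {c : ℚ} (hc : 0 < c) {x : Set Y → ℝ} (hx : x ∈ cone R) :
    (c:ℝ) • x ∈ cone R := by
  rcases hx with rfl | ⟨c₀, hc₀, p, q, hp, hq, hr, rfl⟩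
  · exact Or.inl (smul_zero _)
  · refine Or.inr ⟨c * c₀, by positivity, p, q, hp, hq, hr, ?_⟩
    rw [smul_smul]; push_cast; ring_nf

lemma scone_smul {c : ℚ} (hc : 0 < c) {x : Set Y → ℝ} (hx : x ∈ scone R) :
    (c:ℝ) • x ∈ scone R := by
  rcases hx with ⟨c₀, hc₀, p, q, hp, hq, hr, rfl⟩
  refine ⟨c * c₀, by positivity, p, q, hp, hq, hr, ?_⟩
  rw [smul_smul]; push_cast; ring_nf

lemma cone_add (htrans : ∀ p q r : Measure Y, IsProbabilityMeasure p → IsProbabilityMeasure q →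
      IsProbabilityMeasure r → R p q → R q r → R p r) (hRI : RatIndep R) {x y : Set Y → ℝ}
    (hx : x ∈ cone R) (hy : y ∈ cone R) : x + y ∈ cone R := by
  rcases hx with rfl | ⟨c, hc, p, q, hp, hq, hr, rfl⟩
  · simpa using hy
  rcases hy with rfl | ⟨c', hc', p', q', hp', hq', hr', rfl⟩
  · simpa using (show (c:ℝ) • dd p q ∈ cone R from Or.inr ⟨c, hc, p, q, hp, hq, hr, rfl⟩)
  haveI := hp; haveI := hq; haveI := hp'; haveI := hq'
  have h1 : (0:ℚ) < c + c' := by linarith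
  have hl0 : (0:ℚ) < c/(c+c') := by positivity
  have hl1 : c/(c+c') < 1 := by rw [div_lt_one h1]; linarith
  refine Or.inr ⟨c + c', h1, _, _, isProb_mix (nn_le_one (le_of_lt hl1)) hp hp',
    isProb_mix (nn_le_one (le_of_lt hl1)) hq hq',
    mix_R htrans hRI hp hq hp' hq' hr hr' hl0 hl1, ?_⟩
  exact dd_comb hc hc' p q p' q'

lemma scone_add (htrans : ∀ p q r : Measure Y, IsProbabilityMeasure p → IsProbabilityMeasure q →
      IsProbabilityMeasure r → R p q → R q r → R p r) (hRI : RatIndep R) {x y : Set Y → ℝ}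
    (hx : x ∈ scone R) (hy : y ∈ scone R) : x + y ∈ scone R := by
  rcases hx with ⟨c, hc, p, q, hp, hq, hr, rfl⟩
  rcases hy with ⟨c', hc', p', q', hp', hq', hr', rfl⟩
  haveI := hp; haveI := hq; haveI := hp'; haveI := hq'
  have h1 : (0:ℚ) < c + c' := by linarith
  have hl0 : (0:ℚ) < c/(c+c') := by positivity
  have hl1 : c/(c+c') < 1 := by rw [div_lt_one h1]; linarith
  refine ⟨c + c', h1, _, _, isProb_mix (nn_le_one (le_of_lt hl1)) hp hp',
    isProb_mix (nn_le_one (le_of_lt hl1)) hq hq',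
    mix_S htrans hRI hp hq hp' hq' hr hr'.1 hl0 hl1, ?_⟩
  exact dd_comb hc hc' p q p' q'

lemma cone_scone_disj (hrefl : ∀ p : Measure Y, IsProbabilityMeasure p → R p p)
    (hRI : RatIndep R) : ∀ s ∈ scone R, -s ∉ cone R := by
  rintro s ⟨c, hc, p, q, hp, hq, hs, rfl⟩ hmem
  haveI := hp; haveI := hq
  have hc0 : (c:ℝ) ≠ 0 := by positivity
  rcases hmem with h0 | ⟨c', hc', p', q', hp', hq', hr', h⟩
  · rw [neg_eq_zero, smul_eq_zero] at h0
    rcases h0 with h0 | h0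
    · exact hc0 h0
    · have := dd_eq_zero h0; subst this; exact hs.2 (hrefl p hp)
  · haveI := hp'; haveI := hq'
    have hdiv : (0:ℚ) < c'/c := by positivity
    have key : ((c'/c : ℚ):ℝ) • dd p' q' = dd q p := by
      funext A
      have h2 := congrFun h A
      simp only [Pi.neg_apply, Pi.smul_apply, smul_eq_mul, dd] at h2 ⊢
      push_cast
      field_simp
      linear_combination -h2
    exact hs.2 (core hRI hq hp hp' hq' hr' hdiv key)

end Cone


section Zorn

variable {R : Measure Y → Measure Y → Prop}

/-- A "good" set: a rational cone containing `cone R` and avoiding `-scone R`. -/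
def Good (R : Measure Y → Measure Y → Prop) (Q : Set (Set Y → ℝ)) : Prop :=
  cone R ⊆ Q ∧ (∀ x ∈ Q, ∀ y ∈ Q, x + y ∈ Q) ∧
  (∀ c : ℚ, 0 < c → ∀ x ∈ Q, (c:ℝ) • x ∈ Q) ∧ (∀ s ∈ scone R, -s ∉ Q)

lemma good_absorb {Q : Set (Set Y → ℝ)} (hQ : Good R Q)
    (hmax : ∀ Q', Good R Q' → Q ⊆ Q' → Q' ⊆ Q) {v : Set Y → ℝ} (hv : v ∉ Q) :
    ∃ s ∈ scone R, ∃ q ∈ Q, ∃ c : ℚ, 0 < c ∧ q + (c:ℝ) • v = -s := by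
  set Q₁ : Set (Set Y → ℝ) := {z | ∃ q ∈ Q, ∃ c : ℚ, 0 ≤ c ∧ z = q + (c:ℝ) • v} with hQ₁
  have hsub : Q ⊆ Q₁ := fun q hq => ⟨q, hq, 0, le_refl _, by simp⟩
  have hvQ₁ : v ∈ Q₁ := ⟨0, hQ.1 cone_zero, 1, by norm_num, by simp⟩
  have hnotgood : ¬ Good R Q₁ := fun hg => hv (hmax Q₁ hg hsub hvQ₁)
  have h1 : cone R ⊆ Q₁ := hQ.1.trans hsub
  have h2 : ∀ x ∈ Q₁, ∀ y ∈ Q₁, x + y ∈ Q₁ := by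
    rintro x ⟨q, hq, c, hc, rfl⟩ y ⟨q', hq', c', hc', rfl⟩
    refine ⟨q + q', hQ.2.1 q hq q' hq', c + c', by linarith, ?_⟩
    push_cast
    module
  have h3 : ∀ c : ℚ, 0 < c → ∀ x ∈ Q₁, (c:ℝ) • x ∈ Q₁ := by
    rintro c₀ hc₀ x ⟨q, hq, c, hc, rfl⟩
    refine ⟨(c₀:ℝ) • q, hQ.2.2.1 c₀ hc₀ q hq, c₀ * c, by positivity, ?_⟩
    push_cast
    module
  have h4 : ¬ ∀ s ∈ scone R, -s ∉ Q₁ := fun h4 => hnotgood ⟨h1, h2, h3, h4⟩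
  push_neg at h4
  obtain ⟨s, hs, hmem⟩ := h4
  obtain ⟨q, hq, c, hc0, heq⟩ := hmem
  have hcne : c ≠ 0 := by
    rintro rfl
    simp only [Rat.cast_zero, zero_smul, add_zero] at heq
    exact hQ.2.2.2 s hs (heq ▸ hq)
  exact ⟨s, hs, q, hq, c, lt_of_le_of_ne hc0 (Ne.symm hcne), heq.symm⟩

lemma good_total
    (htrans : ∀ p q r : Measure Y, IsProbabilityMeasure p → IsProbabilityMeasure q →
      IsProbabilityMeasure r → R p q → R q r → R p r) (hRI : RatIndep R)
    {Q : Set (Set Y → ℝ)} (hQ : Good R Q)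
    (hmax : ∀ Q', Good R Q' → Q ⊆ Q' → Q' ⊆ Q) (x : Set Y → ℝ) :
    x ∈ Q ∨ -x ∈ Q := by
  by_contra hcon
  push_neg at hcon
  obtain ⟨s, hs, q, hq, c, hc, heq⟩ := good_absorb hQ hmax hcon.1
  obtain ⟨s', hs', q', hq', c', hc', heq'⟩ := good_absorb hQ hmax (v := -x) hcon.2
  have e1 : (c':ℝ) • (q + (c:ℝ) • x) = (c':ℝ) • (-s) := by rw [heq]
  have e2 : (c:ℝ) • (q' + (c':ℝ) • (-x)) = (c:ℝ) • (-s') := by rw [heq']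
  have hsum : (c':ℝ) • q + (c:ℝ) • q' = -((c':ℝ) • s + (c:ℝ) • s') := by
    have e3 := congrArg₂ (· + ·) e1 e2
    linear_combination (norm := module) e3
  have hmem : (c':ℝ) • q + (c:ℝ) • q' ∈ Q :=
    hQ.2.1 _ (hQ.2.2.1 c' hc' q hq) _ (hQ.2.2.1 c hc q' hq')
  rw [hsum] at hmem
  exact hQ.2.2.2 _ (scone_add htrans hRI (scone_smul hc' hs) (scone_smul hc hs')) hmem

lemma exists_maximal_good
    (hrefl : ∀ p : Measure Y, IsProbabilityMeasure p → R p p)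
    (htrans : ∀ p q r : Measure Y, IsProbabilityMeasure p → IsProbabilityMeasure q →
      IsProbabilityMeasure r → R p q → R q r → R p r) (hRI : RatIndep R) :
    ∃ Q : Set (Set Y → ℝ), Good R Q ∧ (∀ x : Set Y → ℝ, x ∈ Q ∨ -x ∈ Q) := by
  have hbase : Good R (cone R) :=
    ⟨subset_rfl, fun x hx y hy => cone_add htrans hRI hx hy,
      fun c hc x hx => cone_smul hc hx, cone_scone_disj hrefl hRI⟩
  have hchainub : ∀ ch ⊆ {Q | Good R Q}, IsChain (· ⊆ ·) ch → ch.Nonempty →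
      ∃ ub ∈ {Q | Good R Q}, ∀ s ∈ ch, s ⊆ ub := by
    intro ch hch hchain hne
    obtain ⟨Q₀, hQ₀⟩ := hne
    refine ⟨⋃₀ ch, ⟨?_, ?_, ?_, ?_⟩, fun s hsm => Set.subset_sUnion_of_mem hsm⟩
    · exact ((hch hQ₀).1).trans (Set.subset_sUnion_of_mem hQ₀)
    · rintro x ⟨Q₁, hQ₁, hx⟩ y ⟨Q₂, hQ₂, hy⟩
      rcases hchain.total hQ₁ hQ₂ with h | h
      · exact ⟨Q₂, hQ₂, (hch hQ₂).2.1 x (h hx) y hy⟩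
      · exact ⟨Q₁, hQ₁, (hch hQ₁).2.1 x hx y (h hy)⟩
    · rintro c hc x ⟨Q₁, hQ₁, hx⟩
      exact ⟨Q₁, hQ₁, (hch hQ₁).2.2.1 c hc x hx⟩
    · rintro s hsm ⟨Q₁, hQ₁, hx⟩
      exact (hch hQ₁).2.2.2 s hsm hx
  obtain ⟨Q, hsub, hmax⟩ := zorn_subset_nonempty {Q | Good R Q} hchainub (cone R) hbase
  exact ⟨Q, hmax.1, good_total htrans hRI hmax.1 (fun Q' hQ' hsub' => hmax.2 hQ' hsub')⟩

end Zorn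

end RIExt

/-- Every preorder on `Δ(Y)` satisfying rational independence extends to a complete
preorder on `Δ(Y)` satisfying rational independence. -/
theorem ratIndep_preorder_extension {Y : Type*} [MeasurableSpace Y]
    (R : Measure Y → Measure Y → Prop)
    (hrefl : ∀ p : Measure Y, IsProbabilityMeasure p → R p p)
    (htrans : ∀ p q r : Measure Y, IsProbabilityMeasure p → IsProbabilityMeasure q →
      IsProbabilityMeasure r → R p q → R q r → R p r)
    (hRI : RatIndep R) :
    ∃ R' : Measure Y → Measure Y → Prop,
      (∀ p q : Measure Y, IsProbabilityMeasure p → IsProbabilityMeasure q →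
        (R p q → R' p q) ∧ (StrictRel R p q → StrictRel R' p q)) ∧
      (∀ p : Measure Y, IsProbabilityMeasure p → R' p p) ∧
      (∀ p q r : Measure Y, IsProbabilityMeasure p → IsProbabilityMeasure q →
        IsProbabilityMeasure r → R' p q → R' q r → R' p r) ∧
      (∀ p q : Measure Y, IsProbabilityMeasure p → IsProbabilityMeasure q →
        (R' p q ∨ R' q p)) ∧
      RatIndep R' := by
  classical
  obtain ⟨Q, hQ, htot⟩ := RIExt.exists_maximal_good hrefl htrans hRI
  set R' : Measure Y → Measure Y → Prop :=
    fun p q => ¬ IsProbabilityMeasure p ∨ ¬ IsProbabilityMeasure q ∨ RIExt.dd p q ∈ Q with hR'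
  have hmem : ∀ p q : Measure Y, IsProbabilityMeasure p → IsProbabilityMeasure q →
      (R' p q ↔ RIExt.dd p q ∈ Q) := by
    intro p q hp hq
    constructor
    · rintro (h|h|h)
      · exact absurd hp h
      · exact absurd hq h
      · exact h
    · exact fun h => Or.inr (Or.inr h)
  have honeQ : ∀ {p q : Measure Y}, IsProbabilityMeasure p → IsProbabilityMeasure q →
      R p q → RIExt.dd p q ∈ Q := by
    intro p q hp hq hr
    have h1 : RIExt.dd p q = ((1:ℚ):ℝ) • RIExt.dd p q := by norm_num
    exact hQ.1 (Or.inr ⟨1, one_pos, p, q, hp, hq, hr, h1⟩)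
  refine ⟨R', ?_, ?_, ?_, ?_, ?_⟩
  · intro p q hp hq
    refine ⟨fun hr => (hmem p q hp hq).mpr (honeQ hp hq hr),
      fun hs => ⟨(hmem p q hp hq).mpr (honeQ hp hq hs.1), fun hcon => ?_⟩⟩
    have h3 : RIExt.dd q p ∈ Q := (hmem q p hq hp).mp hcon
    refine hQ.2.2.2 (((1:ℚ):ℝ) • RIExt.dd p q) ⟨1, one_pos, p, q, hp, hq, hs, rfl⟩ ?_
    rw [show -(((1:ℚ):ℝ) • RIExt.dd p q) = RIExt.dd q p by rw [RIExt.dd_neg]; norm_num]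
    exact h3
  · intro p hp
    refine (hmem p p hp hp).mpr ?_
    rw [RIExt.dd_self]
    exact hQ.1 RIExt.cone_zero
  · intro p q r hp hq hr h1 h2
    refine (hmem p r hp hr).mpr ?_
    rw [← RIExt.dd_add_dd p q r]
    exact hQ.2.1 _ ((hmem p q hp hq).mp h1) _ ((hmem q r hq hr).mp h2)
  · intro p q hp hq
    rcases htot (RIExt.dd p q) with h | h
    · exact Or.inl ((hmem p q hp hq).mpr h)
    · refine Or.inr ((hmem q p hq hp).mpr ?_)
      rw [RIExt.dd_neg p q]
      exact h
  · intro p q r hp hq hr a ha0 ha1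
    haveI := hp; haveI := hq; haveI := hr
    have hm1 : IsProbabilityMeasure (mix (Real.toNNReal (a:ℝ)) p r) :=
      RIExt.isProb_mix (RIExt.nn_le_one ha1) hp hr
    have hm2 : IsProbabilityMeasure (mix (Real.toNNReal (a:ℝ)) q r) :=
      RIExt.isProb_mix (RIExt.nn_le_one ha1) hq hr
    have hddm : RIExt.dd (mix (Real.toNNReal (a:ℝ)) p r) (mix (Real.toNNReal (a:ℝ)) q r)
        = (a:ℝ) • RIExt.dd p q := by
      rw [RIExt.dd_mix (le_of_lt ha0) ha1, RIExt.dd_self, smul_zero, add_zero]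
    rw [hmem p q hp hq, hmem _ _ hm1 hm2, hddm]
    constructor
    · exact fun h => hQ.2.2.1 a ha0 _ h
    · intro h
      have h2 := hQ.2.2.1 (1/a) (by positivity) _ h
      rwa [smul_smul, show ((1/a:ℚ):ℝ) * (a:ℝ) = 1 by push_cast; field_simp, one_smul] at h2
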